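/- Let N ≥ 1, 1 ≤ p < ∞, ρ > 0, and let u ∈ L^p(ℝ^N) be nonnegative. If u^H = u almost everywhere for every closed halfspace H ⊂ ℝ^N with 0 ∈ H whose boundary hyperplane ∂H intersects the ball B(0, ρ), then u = u* almost everywhere, where u* is the symmetric decreasing rearrangement of u. -/

import Mathlib

open MeasureTheory Filter

/-- Reflection across the boundary hyperplane `{x : ⟪a,x⟫ = b}` of the closed
halfspace `H = {x : ⟪a,x⟫ ≤ b}` (for `‖a‖ = 1`). -/
noncomputable def reflectH {N : ℕ} (a : EuclideanSpace ℝ (Fin N)) (b : ℝ)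
    (x : EuclideanSpace ℝ (Fin N)) : EuclideanSpace ℝ (Fin N) :=
  x - (2 * ((inner ℝ a x : ℝ) - b)) • a

/-- Polarization (two-point rearrangement) of `u` with respect to the closed halfspace
`H = {x : ⟪a,x⟫ ≤ b}` (for `‖a‖ = 1`). -/
noncomputable def polarization {N : ℕ} (a : EuclideanSpace ℝ (Fin N)) (b : ℝ)
    (u : EuclideanSpace ℝ (Fin N) → ℝ) (x : EuclideanSpace ℝ (Fin N)) : ℝ :=
  if (inner ℝ a x : ℝ) ≤ b then max (u x) (u (reflectH a b x))
  else min (u x) (u (reflectH a b x))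

/-- The symmetric decreasing rearrangement (Schwarz symmetrization) of `u`:
`u⋆ x = sup {l > 0 : vol {u > l} > vol (B(0,‖x‖))}`, with `sup ∅ = 0`. -/
noncomputable def schwarz {N : ℕ} (u : EuclideanSpace ℝ (Fin N) → ℝ)
    (x : EuclideanSpace ℝ (Fin N)) : ℝ :=
  sSup {l : ℝ | 0 < l ∧
    volume (Metric.ball (0 : EuclideanSpace ℝ (Fin N)) ‖x‖) < volume {y | l < u y}}

/-!
If `u^H = u`, the reflection `σ_H` maps the part of each superlevel set `s = {u > q}` lying
beyond `∂H` into `s`. Reflections with `b = 0` move points along spheres, and those with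
`0 < b < ρ` move them inward by steps shorter than `2ρ`; composing them, a neighbourhood of any
`x` is carried into a neighbourhood of any `y` with `‖y‖ < ‖x‖` by a measure-preserving isometry
mapping `s` into `s`. So the Lebesgue density of `s` cannot drop when moving inward, which rules
out a density point of `s` outside the centered ball of the same measure together with a density
point of its complement inside. Hence every superlevel set is a.e. a centered ball, and this
characterizes `u⋆`.
-/

open Metric Set Topology
open scoped ENNReal InnerProductSpace

lemma csSup_eq_of_rat_mem_iff {S : Set ℝ} {v : ℝ} (hv : 0 ≤ v) (hS : ∀ l ∈ S, 0 < l)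
    (hdown : ∀ l ∈ S, ∀ l', 0 < l' → l' ≤ l → l' ∈ S)
    (hrat : ∀ q : ℚ, 0 < (q : ℝ) → ((q : ℝ) ∈ S ↔ (q : ℝ) < v)) :
    sSup S = v := by
  have hle : ∀ l ∈ S, l ≤ v := by
    intro l hl
    by_contra! hvl
    obtain ⟨q, hvq, hql⟩ := exists_rat_btwn hvl
    have hq0 : 0 < (q : ℝ) := hv.trans_lt hvq
    exact hvq.not_gt ((hrat q hq0).1 (hdown l hl q hq0 hql.le))
  rcases hv.eq_or_lt with rfl | hv
  · rw [eq_empty_of_forall_notMem fun l hl => (hS l hl).not_ge (hle l hl), Real.sSup_empty]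
  obtain ⟨q, hq0, hqv⟩ := exists_rat_btwn hv
  refine csSup_eq_of_forall_le_of_forall_lt_exists_gt ⟨q, (hrat q hq0).2 hqv⟩ hle fun c hc => ?_
  obtain ⟨q, hcq, hqv⟩ := exists_rat_btwn (max_lt hc hv)
  exact ⟨q, (hrat q ((le_max_right _ _).trans_lt hcq)).2 hqv, (le_max_left _ _).trans_lt hcq⟩

lemma MeasureTheory.MemLp.measure_lt_lt_top {α : Type*} [MeasurableSpace α] {μ : Measure α}
    {f : α → ℝ} {p : ℝ≥0∞} (hf : MemLp f p μ) (hp0 : p ≠ 0) (hp : p ≠ ∞) {q : ℝ} (hq : 0 < q) :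
    μ {x | q < f x} < ∞ := by
  refine (measure_mono fun x (hx : q < f x) => ?_).trans_lt
    (hf.meas_ge_lt_top' hp0 hp (ENNReal.ofReal_pos.2 hq).ne')
  exact (ENNReal.ofReal_le_ofReal hx.le).trans (Real.ofReal_le_enorm _)

section LocalTransport

variable {X : Type*} [PseudoMetricSpace X] [MeasurableSpace X] {μ : Measure X} {s : Set X}
  {x y z : X}

def LocalTransport (μ : Measure X) (s : Set X) (x y : X) : Prop :=
  ∃ T : X → X, MeasurePreserving T μ μ ∧ Isometry T ∧ T x = y ∧
    ∃ ε > 0, ∀ᵐ z ∂μ, z ∈ ball x ε → z ∈ s → T z ∈ s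

lemma LocalTransport.refl (μ : Measure X) (s : Set X) (x : X) : LocalTransport μ s x x :=
  ⟨id, .id μ, isometry_id, rfl, 1, one_pos, .of_forall fun _ _ h => h⟩

lemma LocalTransport.trans (hxy : LocalTransport μ s x y) (hyz : LocalTransport μ s y z) :
    LocalTransport μ s x z := by
  obtain ⟨T, hT, hTi, rfl, ε, hε, hTs⟩ := hxy
  obtain ⟨S, hS, hSi, rfl, δ, hδ, hSs⟩ := hyz
  refine ⟨S ∘ T, hS.comp hT, hSi.comp hTi, rfl, min ε δ, lt_min hε hδ, ?_⟩
  filter_upwards [hTs, hT.quasiMeasurePreserving.ae hSs] with w hwT hwS hw hws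
  refine hwS ?_ (hwT (ball_subset_ball (min_le_left _ _) hw) hws)
  rw [mem_ball, hTi.dist_eq]
  exact (mem_ball.1 hw).trans_le (min_le_right _ _)

lemma LocalTransport.eventually_measure_inter_closedBall_le [OpensMeasurableSpace X]
    (h : LocalTransport μ s x y) (hs : NullMeasurableSet s μ) :
    ∀ᶠ r in 𝓝[>] 0, μ (s ∩ closedBall x r) ≤ μ (s ∩ closedBall y r) := by
  obtain ⟨T, hT, hTi, rfl, ε, hε, hTs⟩ := h
  filter_upwards [Ioo_mem_nhdsGT hε] with r hr
  calc μ (s ∩ closedBall x r) ≤ μ (T ⁻¹' (s ∩ closedBall (T x) r)) := by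
        refine measure_mono_ae ?_
        filter_upwards [hTs] with z hz ⟨hzs, hzx⟩
        refine ⟨hz (closedBall_subset_ball hr.2 hzx) hzs, ?_⟩
        rwa [mem_closedBall, hTi.dist_eq]
    _ = μ (s ∩ closedBall (T x) r) :=
        hT.measure_preimage (hs.inter measurableSet_closedBall.nullMeasurableSet)

end LocalTransport

section Balls

variable {E : Type*} [NormedAddCommGroup E] [NormedSpace ℝ E] [FiniteDimensional ℝ E]
  [MeasurableSpace E] [BorelSpace E] {μ : Measure E} [μ.IsAddHaarMeasure] {s : Set E}

/-- Lebesgue density: `s` would have density `1` at some point outside the ball and density `0`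
at some point inside, contradicting the transport from the former to the latter. -/
lemma measure_diff_ball_eq_zero_or_of_localTransport (hs : MeasurableSet s)
    (h : ∀ x y : E, ‖y‖ < ‖x‖ → LocalTransport μ s x y) (r : ℝ) :
    μ (s \ ball 0 r) = 0 ∨ μ (ball 0 r \ s) = 0 := by
  by_contra! hpos
  have hdens := Besicovitch.ae_tendsto_measure_inter_div_of_measurableSet μ hs
  obtain ⟨x, ⟨hxs, hxr⟩, hx⟩ :=
    Measure.exists_mem_of_measure_ne_zero_of_ae hpos.1 (ae_restrict_of_ae hdens)
  obtain ⟨y, ⟨hyr, hys⟩, hy⟩ :=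
    Measure.exists_mem_of_measure_ne_zero_of_ae hpos.2 (ae_restrict_of_ae hdens)
  rw [indicator_of_mem hxs] at hx
  rw [indicator_of_notMem hys] at hy
  have hyx : ‖y‖ < ‖x‖ := by
    rw [mem_ball_zero_iff] at hxr hyr
    linarith
  have hle : ∀ᶠ r in 𝓝[>] 0, μ (s ∩ closedBall x r) / μ (closedBall x r) ≤
      μ (s ∩ closedBall y r) / μ (closedBall y r) := by
    filter_upwards [(h x y hyx).eventually_measure_inter_closedBall_le hs.nullMeasurableSet]
      with r hr
    rw [Measure.addHaar_closedBall_center μ x, Measure.addHaar_closedBall_center μ y]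
    exact ENNReal.div_le_div_right hr _
  simpa using le_of_tendsto_of_tendsto hx hy hle

variable [Nontrivial E]

lemma exists_measure_ball_eq {m : ℝ≥0∞} (hm : m ≠ ∞) : ∃ r, 0 ≤ r ∧ μ (ball 0 r) = m := by
  set c := μ (ball 0 1)
  have hc0 : c ≠ 0 := (measure_ball_pos μ 0 one_pos).ne'
  have hc : c ≠ ∞ := measure_ball_lt_top.ne
  have hd : Module.finrank ℝ E ≠ 0 := Module.finrank_pos.ne'
  have hmc : 0 ≤ m.toReal / c.toReal := by positivity
  refine ⟨(m.toReal / c.toReal) ^ (Module.finrank ℝ E : ℝ)⁻¹, by positivity, ?_⟩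
  rw [Measure.addHaar_ball μ _ (by positivity), ← Real.rpow_natCast, ← Real.rpow_mul hmc,
    inv_mul_cancel₀ (Nat.cast_ne_zero.2 hd), Real.rpow_one, ENNReal.ofReal_div_of_pos
    (ENNReal.toReal_pos hc0 hc), ENNReal.ofReal_toReal hm, ENNReal.ofReal_toReal hc,
    ENNReal.div_mul_cancel hc0 hc]

lemma measure_ball_lt_measure_ball_iff {r r' : ℝ} (hr : 0 ≤ r) (hr' : 0 ≤ r') :
    μ (ball 0 r) < μ (ball (0 : E) r') ↔ r < r' := by
  have hfin : Module.finrank ℝ E ≠ 0 := Module.finrank_pos.ne'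
  rw [Measure.addHaar_ball μ _ hr, Measure.addHaar_ball μ _ hr',
    ENNReal.mul_lt_mul_iff_left (measure_ball_pos μ 0 one_pos).ne' measure_ball_lt_top.ne,
    ENNReal.ofReal_lt_ofReal_iff_of_nonneg (by positivity), pow_lt_pow_iff_left₀ hr hr' hfin]

lemma ae_eq_ball_of_localTransport (hs : MeasurableSet s) (hfin : μ s ≠ ∞)
    (h : ∀ x y : E, ‖y‖ < ‖x‖ → LocalTransport μ s x y) : ∃ r, 0 ≤ r ∧ s =ᵐ[μ] ball 0 r := by
  obtain ⟨r, hr, hrs⟩ := exists_measure_ball_eq (μ := μ) hfin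
  refine ⟨r, hr, ?_⟩
  rcases measure_diff_ball_eq_zero_or_of_localTransport hs h r with h0 | h0
  · exact ae_eq_of_ae_subset_of_measure_ge (ae_le_set.2 h0) hrs.le hs.nullMeasurableSet
      (hrs ▸ hfin)
  · exact (ae_eq_of_ae_subset_of_measure_ge (ae_le_set.2 h0) hrs.ge
      measurableSet_ball.nullMeasurableSet hfin).symm

lemma ae_mem_iff_measure_ball_lt {r : ℝ} (hr : 0 ≤ r) (hs : s =ᵐ[μ] ball 0 r) :
    ∀ᵐ x ∂μ, x ∈ s ↔ μ (ball 0 ‖x‖) < μ s := by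
  filter_upwards [hs] with x hx
  rw [measure_congr hs, measure_ball_lt_measure_ball_iff (norm_nonneg x) hr, ← mem_ball_zero_iff]
  exact Iff.of_eq hx

end Balls

section Reflections

variable {N : ℕ} {a e x y : EuclideanSpace ℝ (Fin N)} {b ρ : ℝ}
  {s : Set (EuclideanSpace ℝ (Fin N))}

lemma reflectH_eq_reflection_add (ha : ‖a‖ = 1) (b : ℝ) (x : EuclideanSpace ℝ (Fin N)) :
    reflectH a b x = (ℝ ∙ a)ᗮ.reflection x + (2 * b) • a := by
  rw [reflectH, Submodule.reflection_orthogonal_apply, Submodule.reflection_singleton_apply, ha]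
  simp only [RCLike.ofReal_real_eq_id, id, one_pow, div_one, two_smul]
  module

lemma isometry_reflectH (ha : ‖a‖ = 1) (b : ℝ) : Isometry (reflectH a b) := by
  rw [funext (reflectH_eq_reflection_add ha b)]
  exact (isometry_add_right _).comp (LinearIsometryEquiv.isometry _)

lemma measurePreserving_reflectH (ha : ‖a‖ = 1) (b : ℝ) :
    MeasurePreserving (reflectH a b) volume volume := by
  rw [funext (reflectH_eq_reflection_add ha b)]
  exact (measurePreserving_add_right volume _).comp (LinearIsometryEquiv.measurePreserving _)

lemma reflectH_smul_self (he : ‖e‖ = 1) (b t : ℝ) : reflectH e b (t • e) = (2 * b - t) • e := by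
  rw [reflectH, real_inner_smul_right, real_inner_self_eq_norm_sq, he]
  module

def StableUnderInwardReflections (ρ : ℝ) (s : Set (EuclideanSpace ℝ (Fin N))) : Prop :=
  ∀ a b, ‖a‖ = 1 → 0 ≤ b → b < ρ → ∀ᵐ x, b < ⟪a, x⟫_ℝ → x ∈ s → reflectH a b x ∈ s

namespace StableUnderInwardReflections

lemma localTransport_reflectH (hs : StableUnderInwardReflections ρ s) (ha : ‖a‖ = 1)
    (hb : 0 ≤ b) (hbρ : b < ρ) (hx : b < ⟪a, x⟫_ℝ) :
    LocalTransport volume s x (reflectH a b x) := by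
  refine ⟨reflectH a b, measurePreserving_reflectH ha b, isometry_reflectH ha b, rfl,
    ⟪a, x⟫_ℝ - b, sub_pos.2 hx, ?_⟩
  filter_upwards [hs a b ha hb hbρ] with z hz hzx
  refine hz ?_
  have hax := real_inner_le_norm a (x - z)
  rw [inner_sub_right, ha, one_mul, ← dist_eq_norm, dist_comm] at hax
  linarith [mem_ball.1 hzx]

lemma localTransport_of_norm_eq (hs : StableUnderInwardReflections ρ s) (hρ : 0 < ρ)
    (hxy : ‖x‖ = ‖y‖) : LocalTransport volume s x y := by
  rcases eq_or_ne x y with rfl | hne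
  · exact .refl _ _ _
  have hd : ‖x - y‖ ≠ 0 := norm_ne_zero_iff.2 (sub_ne_zero.2 hne)
  set a := ‖x - y‖⁻¹ • (x - y)
  have ha : ‖a‖ = 1 := norm_smul_inv_norm (sub_ne_zero.2 hne)
  have hxa : reflectH a 0 x = y := by
    simp [reflectH_eq_reflection_add ha, a,
      Submodule.span_singleton_smul_eq (inv_ne_zero hd).isUnit, Submodule.reflection_sub hxy]
  have hax : 0 < ⟪a, x⟫_ℝ := by
    have h2 : 2 * ⟪x - y, x⟫_ℝ = ‖x - y‖ ^ 2 := by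
      rw [norm_sub_sq_real, inner_sub_left, real_inner_self_eq_norm_sq, real_inner_comm, hxy]
      ring
    rw [real_inner_smul_left, ← mul_pos_iff_of_pos_left two_pos, mul_left_comm, h2]
    positivity
  simpa [hxa] using hs.localTransport_reflectH ha le_rfl hρ hax

lemma localTransport_smul_of_sub_lt (hs : StableUnderInwardReflections ρ s) (he : ‖e‖ = 1)
    {r t : ℝ} (ht : 0 ≤ t) (htr : t < r) (hrt : r - t < 2 * ρ) :
    LocalTransport volume s (r • e) (t • e) := by
  have hre : (r - t) / 2 < ⟪e, r • e⟫_ℝ := by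
    rw [real_inner_smul_right, real_inner_self_eq_norm_sq, he]
    linarith
  have h := hs.localTransport_reflectH he (by linarith) (by linarith) hre
  rw [reflectH_smul_self he, show 2 * ((r - t) / 2) - r = -t by ring] at h
  refine h.trans (hs.localTransport_of_norm_eq (by linarith) ?_)
  rw [neg_smul, norm_neg]

lemma localTransport_smul_of_lt (hs : StableUnderInwardReflections ρ s) (hρ : 0 < ρ)
    (he : ‖e‖ = 1) {r t : ℝ} (ht : 0 ≤ t) (htr : t < r) :
    LocalTransport volume s (r • e) (t • e) := by
  obtain ⟨n, hn⟩ := exists_nat_ge ((r - t) / ρ)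
  rw [div_le_iff₀ hρ] at hn
  induction n generalizing r with
  | zero =>
    simp only [CharP.cast_eq_zero, zero_mul, tsub_le_iff_right, zero_add] at hn
    linarith
  | succ n ih =>
    rcases lt_or_ge (r - t) (2 * ρ) with hrt | hrt
    · exact hs.localTransport_smul_of_sub_lt he ht htr hrt
    · refine (hs.localTransport_smul_of_sub_lt he (by linarith) (by linarith) (by linarith)).trans
        (ih (r := r - ρ) (by linarith) ?_)
      push_cast at hn
      linarith

lemma localTransport_of_norm_lt (hs : StableUnderInwardReflections ρ s) (hρ : 0 < ρ)
    (hxy : ‖y‖ < ‖x‖) : LocalTransport volume s x y := by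
  have hx : x ≠ 0 := norm_pos_iff.1 ((norm_nonneg y).trans_lt hxy)
  set e := ‖x‖⁻¹ • x
  have he : ‖e‖ = 1 := norm_smul_inv_norm hx
  have hxe : ‖x‖ • e = x := by
    rw [smul_smul, mul_inv_cancel₀ (norm_ne_zero_iff.2 hx), one_smul]
  have h := hs.localTransport_smul_of_lt hρ he (norm_nonneg y) hxy
  rw [hxe] at h
  refine h.trans (hs.localTransport_of_norm_eq hρ ?_)
  rw [norm_smul, he, mul_one, Real.norm_of_nonneg (norm_nonneg y)]

end StableUnderInwardReflections

end Reflections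

section Rearrangement

variable {N : ℕ} {ρ : ℝ} {u w : EuclideanSpace ℝ (Fin N) → ℝ}

lemma ae_le_comp_reflectH_of_polarization_ae_eq {a : EuclideanSpace ℝ (Fin N)} {b : ℝ}
    (h : polarization a b u =ᵐ[volume] u) :
    ∀ᵐ x, b < ⟪a, x⟫_ℝ → u x ≤ u (reflectH a b x) := by
  filter_upwards [h] with x hx hbx
  rw [polarization, if_neg hbx.not_ge] at hx
  exact hx ▸ min_le_right _ _

lemma stableUnderInwardReflections_setOf_lt
    (hpol : ∀ (a : EuclideanSpace ℝ (Fin N)) (b : ℝ), ‖a‖ = 1 → 0 ≤ b → b < ρ →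
      polarization a b u =ᵐ[volume] u)
    (huw : u =ᵐ[volume] w) (q : ℝ) : StableUnderInwardReflections ρ {x | q < w x} := by
  intro a b ha hb hbρ
  filter_upwards [ae_le_comp_reflectH_of_polarization_ae_eq (hpol a b ha hb hbρ), huw,
    (measurePreserving_reflectH ha b).quasiMeasurePreserving.ae huw] with x hle hx hσx hbx hqx
  simp only [← hx, ← hσx] at hqx ⊢
  exact hqx.trans_le (hle hbx)

lemma schwarz_congr_ae (h : u =ᵐ[volume] w) : schwarz u = schwarz w := by
  ext x
  simp only [schwarz]
  congr! 5 with l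
  exact measure_congr (h.mono fun y hy => show (l < u y) = (l < w y) by rw [hy])

lemma ae_eq_schwarz_of_ae_mem_setOf_lt_iff (hw0 : ∀ᵐ x, 0 ≤ w x)
    (h : ∀ q : ℝ, 0 < q → ∀ᵐ x, x ∈ {y | q < w y} ↔
      volume (ball (0 : EuclideanSpace ℝ (Fin N)) ‖x‖) < volume {y | q < w y}) :
    w =ᵐ[volume] schwarz w := by
  have hrat : ∀ᵐ x, ∀ q : ℚ, 0 < (q : ℝ) → (q < w x ↔
      volume (ball (0 : EuclideanSpace ℝ (Fin N)) ‖x‖) < volume {y | q < w y}) := by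
    refine ae_all_iff.2 fun q => ?_
    by_cases hq : 0 < (q : ℝ)
    · filter_upwards [h q hq] with x hx _ using hx
    · exact .of_forall fun x h => absurd h hq
  filter_upwards [hw0, hrat] with x hx0 hx
  refine (csSup_eq_of_rat_mem_iff hx0 (fun l hl => hl.1) ?_ fun q hq => ?_).symm
  · rintro l ⟨-, hl⟩ l' hl'0 hl'
    exact ⟨hl'0, hl.trans_le (measure_mono fun y hy => hl'.trans_lt hy)⟩
  · simpa [hq] using (hx q hq).symm

end Rearrangement

/-- For nonnegative `u ∈ L^p(ℝ^N)` and `ρ > 0`: if `u^H = u` a.e. for every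
closed halfspace `H = {x : ⟪a,x⟫ ≤ b}` with `0 ∈ H` whose boundary meets `B(0,ρ)`
(i.e. `0 ≤ b < ρ`), then `u = u⋆` a.e. -/
theorem statement7 {N : ℕ} (hN : 1 ≤ N) (p : ℝ) (hp : 1 ≤ p) (ρ : ℝ) (hρ : 0 < ρ)
    (u : EuclideanSpace ℝ (Fin N) → ℝ)
    (hu : MemLp u (ENNReal.ofReal p) volume) (hu0 : ∀ x, 0 ≤ u x)
    (hpol : ∀ (a : EuclideanSpace ℝ (Fin N)) (b : ℝ), ‖a‖ = 1 → 0 ≤ b → b < ρ →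
      polarization a b u =ᵐ[volume] u) :
    u =ᵐ[volume] schwarz u := by
  have : Nonempty (Fin N) := ⟨⟨0, hN⟩⟩
  obtain ⟨w, hw, huw⟩ : ∃ w, Measurable w ∧ u =ᵐ[volume] w :=
    ⟨_, hu.aemeasurable.measurable_mk, hu.aemeasurable.ae_eq_mk⟩
  have hp0 : ENNReal.ofReal p ≠ 0 := (ENNReal.ofReal_pos.2 (by linarith)).ne'
  have hlevel (q : ℝ) (hq : 0 < q) : ∀ᵐ x, x ∈ {y | q < w y} ↔
      volume (ball (0 : EuclideanSpace ℝ (Fin N)) ‖x‖) < volume {y | q < w y} := by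
    obtain ⟨r, hr, hball⟩ := ae_eq_ball_of_localTransport (measurableSet_lt measurable_const hw)
      ((hu.ae_eq huw).measure_lt_lt_top hp0 ENNReal.ofReal_ne_top hq).ne
      fun x y hxy => (stableUnderInwardReflections_setOf_lt hpol huw q).localTransport_of_norm_lt
        hρ hxy
    exact ae_mem_iff_measure_ball_lt hr hball
  rw [schwarz_congr_ae huw]
  exact huw.trans (ae_eq_schwarz_of_ae_mem_setOf_lt_iff (huw.mono fun x hx => hx ▸ hu0 x) hlevel)
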